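/- arXiv:1709.05536 — 2 statements merged into one kernel-verified Lean document; each statement's English description precedes it below -/
import Mathlib

section
/- With p an odd prime, r a primitive root mod p, λ an integer with λ(r-1) ≡ 1 (mod p), m = (p-1)/2, and α = ∏_{j=0}^{m-1}(1-ζ_p^{r^j}), the element ζ_p^λ·α satisfies σ(ζ_p^λ α) = -ζ_p^λ α, where σ(ζ_p) = ζ_p^r. -/
/-!
Since `r λ ≡ λ + 1 (mod p)`, `σ` multiplies `ζ^λ` by `ζ`. On `α`, `σ` shifts the factors
`1 - ζ^{r^j}` by one, so the product telescopes to `σ α · (1 - ζ) = α · (1 - ζ^{r^m})`; as `r` has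
order `2m`, `r^m ≡ -1` and `1 - ζ^{r^m} = 1 - ζ⁻¹ = -ζ⁻¹ (1 - ζ)`, whence `σ α = -ζ⁻¹ α`.
-/

open Finset

theorem pow_eq_neg_one_of_orderOf_eq_two_mul {R : Type*} [CommRing R] [IsDomain R] {x : R}
    {m : ℕ} (hx : orderOf x = 2 * m) (hm : m ≠ 0) : x ^ m = -1 :=
  ((hx ▸ IsPrimitiveRoot.orderOf x).pow (by omega) (mul_comm 2 m)).eq_neg_one_of_two_right

theorem IsPrimitiveRoot.zpow_eq_zpow_of_intCast_eq {G₀ : Type*} [CommGroupWithZero G₀]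
    {ζ : G₀} {k : ℕ} [NeZero k] (hζ : IsPrimitiveRoot ζ k) {a b : ℤ}
    (h : (a : ZMod k) = b) : ζ ^ a = ζ ^ b := by
  have hζ0 : ζ ≠ 0 := hζ.ne_zero (NeZero.ne k)
  have hdiff : ζ ^ (b - a) = 1 :=
    (hζ.zpow_eq_one_iff_dvd _).mpr ((ZMod.intCast_eq_intCast_iff_dvd_sub a b k).mp h)
  rw [← add_sub_cancel a b, zpow_add₀ hζ0, hdiff, mul_one]

theorem map_prod_one_sub_pow_pow_mul {R F : Type*} [CommRing R] [FunLike F R R]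
    [RingHomClass F R R] (σ : F) {ζ : R} {r : ℕ} (hσ : σ ζ = ζ ^ r) (m : ℕ) :
    σ (∏ j ∈ range m, (1 - ζ ^ r ^ j)) * (1 - ζ) =
      (∏ j ∈ range m, (1 - ζ ^ r ^ j)) * (1 - ζ ^ r ^ m) := by
  have hshift (j : ℕ) : σ (1 - ζ ^ r ^ j) = 1 - ζ ^ r ^ (j + 1) := by
    rw [map_sub, map_one, map_pow, hσ, ← pow_mul, pow_succ', mul_comm r]
  rw [map_prod, ← prod_range_succ, prod_range_succ']
  simp only [hshift, pow_zero, pow_one]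

theorem map_prod_one_sub_pow_pow_eq_neg_inv_mul {K F : Type*} [Field K] [FunLike F K K]
    [RingHomClass F K K] (σ : F) {ζ : K} (hζ0 : ζ ≠ 0) (hζ1 : ζ ≠ 1) {r m : ℕ}
    (hσ : σ ζ = ζ ^ r) (hrm : ζ ^ r ^ m = ζ⁻¹) :
    σ (∏ j ∈ range m, (1 - ζ ^ r ^ j)) = -ζ⁻¹ * ∏ j ∈ range m, (1 - ζ ^ r ^ j) := by
  have hne : 1 - ζ ≠ 0 := sub_ne_zero.mpr hζ1.symm
  apply mul_right_cancel₀ hne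
  rw [map_prod_one_sub_pow_pow_mul σ hσ, hrm]
  field_simp
  ring

/-- With `λ` an integer satisfying `λ(r-1) ≡ 1 (mod p)`, the element `ζ^λ α` satisfies
`σ (ζ^λ α) = -(ζ^λ α)`. -/
theorem stmt1 (p : ℕ) (hp : p.Prime) (hodd : Odd p)
    (K : Type*) [Field K] [CharZero K]
    (ζ : K) (hζ : IsPrimitiveRoot ζ p)
    (r : ℕ) (hr : orderOf (r : ZMod p) = p - 1)
    (lam : ℤ) (hlam : ((lam * ((r : ℤ) - 1) : ℤ) : ZMod p) = 1)
    (σ : K ≃ₐ[ℚ] K) (hσ : σ ζ = ζ ^ r) :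
    σ (ζ ^ lam * ∏ j ∈ Finset.range ((p - 1) / 2), (1 - ζ ^ r ^ j)) =
      -(ζ ^ lam * ∏ j ∈ Finset.range ((p - 1) / 2), (1 - ζ ^ r ^ j)) := by
  have : Fact p.Prime := ⟨hp⟩
  have hp3 : 3 ≤ p := by
    have := hp.two_le
    rcases hodd with ⟨k, rfl⟩
    omega
  have hζ0 : ζ ≠ 0 := hζ.ne_zero hp.ne_zero
  set m := (p - 1) / 2
  have hr2m : orderOf (r : ZMod p) = 2 * m := by
    rw [hr, Nat.two_mul_div_two_of_even (Nat.Odd.sub_odd hodd odd_one)]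
  have hrm : (r : ZMod p) ^ m = -1 := pow_eq_neg_one_of_orderOf_eq_two_mul hr2m (by omega)
  have hζrm : ζ ^ r ^ m = ζ⁻¹ := by
    rw [← zpow_natCast, ← zpow_neg_one]
    exact hζ.zpow_eq_zpow_of_intCast_eq (by push_cast; exact hrm)
  have hσlam : σ (ζ ^ lam) = ζ ^ lam * ζ := by
    rw [map_zpow₀, hσ, ← zpow_natCast, ← zpow_mul, ← zpow_add_one₀ hζ0]
    exact hζ.zpow_eq_zpow_of_intCast_eq (by push_cast at hlam ⊢; linear_combination hlam)
  rw [map_mul, hσlam, map_prod_one_sub_pow_pow_eq_neg_inv_mul σ hζ0 (hζ.ne_one hp.one_lt) hσ hζrm]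
  field_simp
end

section
/- If p = 2n+1 is prime (so K = Q(ζ_p + ζ_p^{-1})), then σ(x)/x is an algebraic integer; indeed σ(x)/x = -ζ_p^{r-1} · (1-ζ_p^{r(r^n - 1)})/(1-ζ_p^{r^n - 1}), which is a unit in ℤ[ζ_p]. -/
/-! Write `z = w (1 - ζ)` with `w = ζ^λ α`. Since `r^n ≡ -1 (mod p)`, the product `α` telescopes
under `σ` to `σ α = -ζ⁻¹ α`, while `λ (r - 1) ≡ 1` gives `σ (ζ^λ) = ζ^(λ+1)`; hence `σ w = -w`.
As `n` is odd, `x = σ^n z + σ^(2n) z = w (ζ^(r^n) - ζ) = w ζ (ζ^(r^n-1) - 1)`, which gives the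
formula for `σ x / x`. Its second factor is the geometric sum `∑_{i<r} (ζ^(r^n-1))^i`, a
cyclotomic unit because `r` and `r^n - 1 ≡ -2` are prime to `p`. -/

open Finset

theorem pow_eq_neg_one_of_orderOf_eq_two_mul_s9 {R : Type*} [CommRing R] [NoZeroDivisors R] {a : R}
    {n : ℕ} (hn : n ≠ 0) (h : orderOf a = 2 * n) : a ^ n = -1 := by
  have := (h ▸ IsPrimitiveRoot.orderOf a).pow_of_dvd hn (dvd_mul_left n 2)
  rw [Nat.mul_div_cancel _ (Nat.pos_of_ne_zero hn)] at this
  exact this.eq_neg_one_of_two_right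

theorem coprime_pow_sub_one_of_natCast_pow_eq_neg_one {p r n : ℕ} (hp : Odd p) (hr : r ≠ 0)
    (h : (r : ZMod p) ^ n = -1) : (r ^ n - 1).Coprime p := by
  refine (ZMod.isUnit_iff_coprime _ _).mp ?_
  rw [Nat.cast_sub (Nat.one_le_pow _ _ (Nat.pos_of_ne_zero hr)), Nat.cast_pow, h]
  simpa [← neg_add', one_add_one_eq_two] using (ZMod.isUnit_iff_coprime 2 p).mpr (by simpa)

theorem map_prod_one_sub_pow_pow_mul_one_sub {R F : Type*} [CommRing R] [FunLike F R R]
    [RingHomClass F R R] (f : F) {ζ : R} {r : ℕ} (hf : f ζ = ζ ^ r) (m : ℕ) :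
    f (∏ j ∈ range m, (1 - ζ ^ r ^ j)) * (1 - ζ) =
      (∏ j ∈ range m, (1 - ζ ^ r ^ j)) * (1 - ζ ^ r ^ m) := by
  have hfj (j : ℕ) : f (1 - ζ ^ r ^ j) = 1 - ζ ^ r ^ (j + 1) := by
    rw [map_sub, map_one, map_pow, hf, ← pow_mul, pow_succ']
  rw [map_prod, prod_congr rfl fun j _ ↦ hfj j]
  simpa using (prod_range_succ' (fun j ↦ 1 - ζ ^ r ^ j) m).symm.trans (prod_range_succ _ m)

theorem map_zpow_mul_prod_one_sub_pow_pow_eq_neg {L F : Type*} [Field L] [FunLike F L L]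
    [RingHomClass F L L] (f : F) {ζ : L} {r m : ℕ} {lam : ℤ} (hf : f ζ = ζ ^ r) (hζ1 : ζ ≠ 1)
    (hm : ζ ^ r ^ m * ζ = 1) (hlam : (ζ ^ r) ^ lam = ζ ^ lam * ζ) :
    f (ζ ^ lam * ∏ j ∈ range m, (1 - ζ ^ r ^ j)) =
      -(ζ ^ lam * ∏ j ∈ range m, (1 - ζ ^ r ^ j)) := by
  have htel := map_prod_one_sub_pow_pow_mul_one_sub f hf m
  refine mul_right_cancel₀ (sub_ne_zero.mpr hζ1.symm) ?_
  rw [map_mul, map_zpow₀, hf, hlam]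
  linear_combination ζ ^ lam * ζ * htel - ζ ^ lam * (∏ j ∈ range m, (1 - ζ ^ r ^ j)) * hm

namespace AlgEquiv

variable {K L : Type*} [CommSemiring K] [CommRing L] [Algebra K L] {σ : L ≃ₐ[K] L}

theorem pow_apply_eq_neg_one_pow_mul {w : L} (hw : σ w = -w) (k : ℕ) :
    (σ ^ k) w = (-1) ^ k * w := by
  induction k with
  | zero => simp
  | succ k ih => rw [pow_succ', mul_apply, ih, map_mul, hw, map_pow, map_neg, map_one]; ring

theorem pow_apply_eq_pow_pow {ζ : L} {r : ℕ} (hσ : σ ζ = ζ ^ r) (k : ℕ) :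
    (σ ^ k) ζ = ζ ^ r ^ k := by
  induction k with
  | zero => simp
  | succ k ih => rw [pow_succ, mul_apply, hσ, map_pow, ih, ← pow_mul, pow_succ]

theorem sum_range_two_pow_apply_mul_one_sub {w ζ : L} {r n : ℕ} (hw : σ w = -w)
    (hσ : σ ζ = ζ ^ r) (hn : Odd n) (hζn : ζ ^ r ^ n * ζ = 1) :
    ∑ j ∈ range 2, (σ ^ ((j + 1) * n)) (w * (1 - ζ)) = w * (ζ ^ r ^ n - ζ) := by
  have hsq : (ζ ^ r ^ n) ^ r ^ n * ζ ^ r ^ n = 1 := by rw [← mul_pow, hζn, one_pow]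
  have hper : ζ ^ r ^ (2 * n) = ζ := by
    rw [two_mul, pow_add, pow_mul]
    linear_combination ζ * hsq - (ζ ^ r ^ n) ^ r ^ n * hζn
  simp only [sum_range_succ, sum_range_zero, zero_add, map_mul, map_sub, map_one,
    pow_apply_eq_neg_one_pow_mul hw, pow_apply_eq_pow_pow hσ]
  rw [one_mul, hn.neg_one_pow, show (1 + 1) * n = 2 * n by ring, pow_mul (-1 : L), neg_one_sq,
    one_pow, hper]
  ring

end AlgEquiv

theorem map_div_eq_neg_pow_mul_div {L F : Type*} [Field L] [FunLike F L L] [RingHomClass F L L]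
    (f : F) {w ζ : L} {r b : ℕ} (hw : f w = -w) (hf : f ζ = ζ ^ r) (hw0 : w ≠ 0) (hζ0 : ζ ≠ 0)
    (hr : r ≠ 0) (hb : ζ ^ b ≠ 1) :
    f (w * ζ * (ζ ^ b - 1)) / (w * ζ * (ζ ^ b - 1)) =
      -ζ ^ (r - 1) * ((1 - ζ ^ (r * b)) / (1 - ζ ^ b)) := by
  have hb₁ : ζ ^ b - 1 ≠ 0 := sub_ne_zero.mpr hb
  have hb₂ : 1 - ζ ^ b ≠ 0 := sub_ne_zero.mpr hb.symm
  rw [map_mul, map_mul, map_sub, map_one, map_pow, hw, hf, ← pow_mul,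
    ← pow_sub_one_mul hr ζ]
  field_simp
  ring

namespace IsPrimitiveRoot

variable {L : Type*} [Field L] {ζ : L} {p : ℕ}

theorem pow_zpow_eq_zpow_mul_self (hζ : IsPrimitiveRoot ζ p) (hp : p ≠ 0) {r : ℕ}
    {lam : ℤ} (hlam : ((lam * ((r : ℤ) - 1) : ℤ) : ZMod p) = 1) : (ζ ^ r) ^ lam = ζ ^ lam * ζ := by
  have hdvd : (p : ℤ) ∣ lam * ((r : ℤ) - 1) - 1 := by
    simpa using (ZMod.intCast_eq_intCast_iff_dvd_sub 1 _ p).mp (by simpa using hlam.symm)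
  rw [← zpow_natCast, ← zpow_mul, ← zpow_add_one₀ (hζ.ne_zero hp),
    show (r : ℤ) * lam = lam + 1 + (lam * ((r : ℤ) - 1) - 1) by ring,
    zpow_add₀ (hζ.ne_zero hp), (hζ.zpow_eq_one_iff_dvd _).mpr hdvd, mul_one]

theorem pow_mul_self_eq_one (hζ : IsPrimitiveRoot ζ p) {k : ℕ} (hk : (k : ZMod p) = -1) :
    ζ ^ k * ζ = 1 := by
  rw [← pow_succ, hζ.pow_eq_one_iff_dvd, ← ZMod.natCast_eq_zero_iff, Nat.cast_succ, hk,
    neg_add_cancel]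

theorem exists_unit_adjoin_eq_neg_pow_mul_div (hζ : IsPrimitiveRoot ζ p) (hp : 2 ≤ p)
    {a b : ℕ} (ha : a.Coprime p) (hb : b.Coprime p) (c : ℕ) :
    ∃ u : (Algebra.adjoin ℤ {ζ})ˣ, (u : L) = -ζ ^ c * ((1 - ζ ^ (a * b)) / (1 - ζ ^ b)) := by
  let ζS : Algebra.adjoin ℤ {ζ} := ⟨ζ, Algebra.self_mem_adjoin_singleton ℤ ζ⟩
  have hζS : IsPrimitiveRoot ζS p := coe_submonoidClass_iff.mp hζ
  have hunit : IsUnit (-ζS ^ c * ∑ i ∈ range a, (ζS ^ b) ^ i) :=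
    ((hζS.isUnit (by omega)).pow c).neg.mul ((hζS.pow_of_coprime b hb).geom_sum_isUnit hp ha)
  refine ⟨hunit.unit, ?_⟩
  rw [IsUnit.unit_spec]
  push_cast
  rw [geom_sum_eq ((hζ.pow_of_coprime b hb).ne_one hp), ← pow_mul, mul_comm b a,
    ← neg_div_neg_eq, neg_sub, neg_sub]

end IsPrimitiveRoot

theorem stmt9_general (n : ℕ) (hnodd : Odd n) (p : ℕ) (hpn : p = 2 * n + 1)
    (hp : p.Prime)
    (L : Type*) [Field L] [CharZero L]
    (ζ : L) (hζ : IsPrimitiveRoot ζ p)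
    (r : ℕ) (hr : orderOf (r : ZMod p) = p - 1)
    (lam : ℤ) (hlam : ((lam * ((r : ℤ) - 1) : ℤ) : ZMod p) = 1)
    (σ : L ≃ₐ[ℚ] L) (hσ : σ ζ = ζ ^ r)
    (z : L)
    (hz : z = ζ ^ lam * (∏ j ∈ Finset.range ((p - 1) / 2), (1 - ζ ^ r ^ j)) * (1 - ζ))
    (x : L) (hx : x = ∑ j ∈ Finset.range ((p - 1) / n), (σ ^ ((j + 1) * n)) z) :
    σ x / x = -ζ ^ (r - 1) * ((1 - ζ ^ (r * (r ^ n - 1))) / (1 - ζ ^ (r ^ n - 1))) ∧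
      σ x / x ∈ Algebra.adjoin ℤ {ζ} ∧
      ∃ w ∈ Algebra.adjoin ℤ {ζ}, (σ x / x) * w = 1 := by
  subst hpn
  have : Fact (2 * n + 1).Prime := ⟨hp⟩
  have hn : n ≠ 0 := by rintro rfl; norm_num at hp
  have hp2 : 2 ≤ 2 * n + 1 := hp.two_le
  have hζ0 : ζ ≠ 0 := hζ.ne_zero hp.ne_zero
  have hrn : (r : ZMod (2 * n + 1)) ^ n = -1 :=
    pow_eq_neg_one_of_orderOf_eq_two_mul_s9 hn (by rw [hr]; omega)
  have hrcop : r.Coprime (2 * n + 1) :=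
    (ZMod.isUnit_iff_coprime _ _).mp ((isUnit_pow_iff hn).mp (hrn ▸ isUnit_one.neg))
  have hr0 : r ≠ 0 := by rintro rfl; exact hn (by simpa using hrcop)
  have hbcop : (r ^ n - 1).Coprime (2 * n + 1) :=
    coprime_pow_sub_one_of_natCast_pow_eq_neg_one (by simp) hr0 hrn
  have hζn : ζ ^ r ^ n * ζ = 1 := hζ.pow_mul_self_eq_one (by rw [Nat.cast_pow, hrn])
  set w := ζ ^ lam * ∏ j ∈ range n, (1 - ζ ^ r ^ j)
  have hw : σ w = -w := map_zpow_mul_prod_one_sub_pow_pow_eq_neg σ hσ (hζ.ne_one hp2) hζn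
    (hζ.pow_zpow_eq_zpow_mul_self hp.ne_zero hlam)
  have hw0 : w ≠ 0 := mul_ne_zero (zpow_ne_zero _ hζ0)
    (prod_ne_zero_iff.mpr fun j _ ↦
      sub_ne_zero.mpr ((hζ.pow_of_coprime _ (hrcop.pow_left j)).ne_one hp2).symm)
  have hxw : x = w * ζ * (ζ ^ (r ^ n - 1) - 1) := by
    rw [hx, show (2 * n + 1 - 1) / n = 2 by
      rw [Nat.add_sub_cancel, Nat.mul_div_cancel _ (Nat.pos_of_ne_zero hn)],
      hz, show (2 * n + 1 - 1) / 2 = n by omega,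
      AlgEquiv.sum_range_two_pow_apply_mul_one_sub hw hσ hnodd hζn,
      ← pow_sub_one_mul (pow_ne_zero n hr0) ζ]
    ring
  obtain ⟨u, hu⟩ := hζ.exists_unit_adjoin_eq_neg_pow_mul_div hp2 hrcop hbcop (r - 1)
  rw [hxw, map_div_eq_neg_pow_mul_div σ hw hσ hw0 hζ0 hr0
    ((hζ.pow_of_coprime _ hbcop).ne_one hp2), ← hu]
  exact ⟨rfl, u.val.2, _, (u⁻¹).val.2, congrArg Subtype.val u.mul_inv⟩

/-- If `p = 2n+1` is prime (so `K = ℚ(ζ_p + ζ_p⁻¹)`), then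
`σ(x)/x = -ζ^{r-1} (1-ζ^{r(r^n-1)})/(1-ζ^{r^n-1})`, which is a unit in `ℤ[ζ_p]`;
in particular `σ(x)/x` is an algebraic integer. -/
theorem stmt9 (n : ℕ) (hn1 : 1 < n) (hnodd : Odd n) (p : ℕ) (hpn : p = 2 * n + 1)
    (hp : p.Prime)
    (L : Type*) [Field L] [CharZero L]
    (ζ : L) (hζ : IsPrimitiveRoot ζ p)
    (r : ℕ) (hr : orderOf (r : ZMod p) = p - 1)
    (lam : ℤ) (hlam : ((lam * ((r : ℤ) - 1) : ℤ) : ZMod p) = 1)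
    (σ : L ≃ₐ[ℚ] L) (hσ : σ ζ = ζ ^ r)
    (z : L)
    (hz : z = ζ ^ lam * (∏ j ∈ Finset.range ((p - 1) / 2), (1 - ζ ^ r ^ j)) * (1 - ζ))
    (x : L) (hx : x = ∑ j ∈ Finset.range ((p - 1) / n), (σ ^ ((j + 1) * n)) z) :
    σ x / x = -ζ ^ (r - 1) * ((1 - ζ ^ (r * (r ^ n - 1))) / (1 - ζ ^ (r ^ n - 1))) ∧
      σ x / x ∈ Algebra.adjoin ℤ {ζ} ∧
      ∃ w ∈ Algebra.adjoin ℤ {ζ}, (σ x / x) * w = 1 :=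
  stmt9_general n hnodd p hpn hp L ζ hζ r hr lam hlam σ hσ z hz x hx
end
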